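/- If X ∪ {t} ⊆ C and X ⊢_dy t, then there is a proof π* of nf(Xσ) ⊢ nf(tσ) such that terms(π*) ⊆ nf(Cσ), and moreover conc(δ*) ∈ nf(Dσ) for every subproof δ* of π* whose last rule is pair, aenc or senc. -/

import Mathlib

/- A formalization of the Dolev-Yao intruder model with XOR, following
"Protocol insecurity with finitely many sessions and XOR".
Multisets of terms (for the XOR operator) are represented by lists;
the normal form of an XOR term is represented canonically by sorting the
(normalized) factors in a fixed linear order (via an injective encoding of
terms into ℕ) and cancelling pairs of equal factors (nilpotence). -/

namespace DYXor

/-- Terms: variables, names (with the distinguished names `0` and `secret`,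
and keys among the names), public keys, pairs, symmetric and asymmetric
encryptions, and XORs of (multi)sets of terms. -/
inductive Term : Type where
  | var : ℕ → Term
  | name : ℕ → Term
  | pk : Term → Term
  | pair : Term → Term → Term
  | senc : Term → Term → Term
  | aenc : Term → Term → Term
  | xor : List Term → Term

/-- The distinguished name `0`, the unit of XOR. -/
def Term.zero : Term := .name 0

/-- The distinguished name `secret`. -/
def Term.secret : Term := .name 1

/-- A term is standard if it is not an XOR term. -/
def Term.IsStandard : Term → Prop
  | .xor _ => False
  | _ => True

/-- The factors of a term, as a list (representing a multiset):
`fac(t) = {t}` for standard `t`, and the multiset union of the factors of the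
members for an XOR term. -/
def facL : Term → List Term
  | .var x => [.var x]
  | .name a => [.name a]
  | .pk u => [.pk u]
  | .pair u v => [.pair u v]
  | .senc u v => [.senc u v]
  | .aenc u v => [.aenc u v]
  | .xor M => M.attach.flatMap fun u => facL u.1
decreasing_by
  have := List.sizeOf_lt_of_mem u.2
  simp only [Term.xor.sizeOf_spec]
  omega

/-- An injective encoding of terms into ℕ, fixing a canonical linear order on
terms. -/
def encode : Term → ℕ
  | .var x => Nat.pair 0 x + 1
  | .name a => Nat.pair 1 a + 1
  | .pk u => Nat.pair 2 (encode u) + 1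
  | .pair u v => Nat.pair 3 (Nat.pair (encode u) (encode v)) + 1
  | .senc u v => Nat.pair 4 (Nat.pair (encode u) (encode v)) + 1
  | .aenc u v => Nat.pair 5 (Nat.pair (encode u) (encode v)) + 1
  | .xor M => Nat.pair 6 ((M.attach.map fun u => encode u.1).foldr (fun a b => Nat.pair a b + 1) 0) + 1
decreasing_by
  all_goals first
  | (have := List.sizeOf_lt_of_mem u.2; simp only [Term.xor.sizeOf_spec]; omega)
  | (simp only [Term.pk.sizeOf_spec, Term.pair.sizeOf_spec, Term.senc.sizeOf_spec,
      Term.aenc.sizeOf_spec]; omega)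

/-- Sort a list of terms in the canonical order. -/
def sortT (l : List Term) : List Term :=
  l.mergeSort fun a b => Nat.ble (encode a) (encode b)

/-- On a (sorted) list, remove pairs of equal adjacent elements, keeping
exactly the elements that occur an odd number of times (nilpotence of ⊕). -/
def cancel : List Term → List Term
  | [] => []
  | [a] => [a]
  | a :: b :: rest =>
      if encode a = encode b then cancel rest else a :: cancel (b :: rest)

/-- `xorOf B` is the term `⊕B`, with the conventions `⊕∅ := 0` and `⊕{t} := t`. -/
def xorOf : List Term → Term
  | [] => Term.zero
  | [t] => t
  | l => .xor l

theorem sizeOf_le_of_mem_facL : ∀ (t : Term), ∀ u ∈ facL t, sizeOf u ≤ sizeOf t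
  | .xor M => by
    intro u hu
    rw [facL] at hu
    simp only [List.mem_flatMap, List.mem_attach, true_and] at hu
    obtain ⟨⟨m, hm⟩, hu⟩ := hu
    have h1 : sizeOf u ≤ sizeOf m := sizeOf_le_of_mem_facL m u hu
    have h2 := List.sizeOf_lt_of_mem hm
    simp only [Term.xor.sizeOf_spec]
    omega
  | .var x => by intro u hu; rw [facL] at hu; simp at hu; simp [hu]
  | .name a => by intro u hu; rw [facL] at hu; simp at hu; simp [hu]
  | .pk v => by intro u hu; rw [facL] at hu; simp at hu; simp [hu]
  | .pair v w => by intro u hu; rw [facL] at hu; simp at hu; simp [hu]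
  | .senc v w => by intro u hu; rw [facL] at hu; simp at hu; simp [hu]
  | .aenc v w => by intro u hu; rw [facL] at hu; simp at hu; simp [hu]
decreasing_by
  all_goals (have := List.sizeOf_lt_of_mem hm; simp only [Term.xor.sizeOf_spec]; omega)

theorem sizeOf_lt_of_mem_facL_xor (M : List Term) :
    ∀ u ∈ facL (.xor M), sizeOf u < sizeOf (Term.xor M) := by
  intro u hu
  rw [facL] at hu
  simp only [List.mem_flatMap, List.mem_attach, true_and] at hu
  obtain ⟨⟨m, hm⟩, hu⟩ := hu
  have h1 := sizeOf_le_of_mem_facL m u hu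
  have h2 := List.sizeOf_lt_of_mem hm
  simp only [Term.xor.sizeOf_spec]
  omega

/-- The normal form `nf(t)` of a term, implementing associativity,
commutativity, the unit `0` and nilpotence of ⊕: the normal form of an XOR
term `r` is the XOR of the *set* of those terms `v` such that the number of
factors `u ∈ fac(r)` with `nf(u) = v` is odd (represented canonically as a
sorted list). -/
def nf : Term → Term
  | .var x => .var x
  | .name a => .name a
  | .pk u => .pk (nf u)
  | .pair u v => .pair (nf u) (nf v)
  | .senc u v => .senc (nf u) (nf v)
  | .aenc u v => .aenc (nf u) (nf v)
  | .xor M => xorOf (cancel (sortT ((facL (.xor M)).attach.map fun u => nf u.1)))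
decreasing_by
  all_goals first
  | (exact sizeOf_lt_of_mem_facL_xor M u.1 u.2)
  | (simp only [Term.pk.sizeOf_spec, Term.pair.sizeOf_spec, Term.senc.sizeOf_spec,
      Term.aenc.sizeOf_spec]; omega)

/-- A term is normalized if it equals its normal form. -/
def Term.Normalized (t : Term) : Prop := nf t = t

/-- Application of a substitution (a map from variables to terms, the identity
outside its domain), extended homomorphically to all terms. -/
def subst (σ : ℕ → Term) : Term → Term
  | .var x => σ x
  | .name a => .name a
  | .pk u => .pk (subst σ u)
  | .pair u v => .pair (subst σ u) (subst σ v)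
  | .senc u v => .senc (subst σ u) (subst σ v)
  | .aenc u v => .aenc (subst σ u) (subst σ v)
  | .xor M => .xor (M.attach.map fun u => subst σ u.1)
decreasing_by
  all_goals first
  | (have := List.sizeOf_lt_of_mem u.2; simp only [Term.xor.sizeOf_spec]; omega)
  | (simp only [Term.pk.sizeOf_spec, Term.pair.sizeOf_spec, Term.senc.sizeOf_spec,
      Term.aenc.sizeOf_spec]; omega)

/-- `IsFactor u t`: `u` occurs in the multiset `fac(t)` of factors of `t`. -/
inductive IsFactor : Term → Term → Prop where
  | std {t : Term} : t.IsStandard → IsFactor t t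
  | xor {t u : Term} {M : List Term} : u ∈ M → IsFactor t u → IsFactor t (.xor M)

/-- The subterm relation: `Subterm u t` iff `u ∈ st(t)`. -/
inductive Subterm : Term → Term → Prop where
  | refl (t : Term) : Subterm t t
  | pk {s u : Term} : Subterm s u → Subterm s (.pk u)
  | pair_l {s u v : Term} : Subterm s u → Subterm s (.pair u v)
  | pair_r {s u v : Term} : Subterm s v → Subterm s (.pair u v)
  | senc_l {s u v : Term} : Subterm s u → Subterm s (.senc u v)
  | senc_r {s u v : Term} : Subterm s v → Subterm s (.senc u v)
  | aenc_l {s u v : Term} : Subterm s u → Subterm s (.aenc u v)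
  | aenc_r {s u v : Term} : Subterm s v → Subterm s (.aenc u v)
  | xor {s u : Term} {M : List Term} :
      IsFactor u (.xor M) → Subterm s u → Subterm s (.xor M)

/-- `st(t)` as a set of terms. -/
def stT (t : Term) : Set Term := {u | Subterm u t}

/-- `st(X)` for a set of terms `X`. -/
def stSet (X : Set Term) : Set Term := {u | ∃ t ∈ X, Subterm u t}

/-- The variables occurring in a term. -/
def varsT (t : Term) : Set ℕ := {x | Subterm (.var x) t}

/-- A term is ground if no variable occurs in it. -/
def Ground (t : Term) : Prop := ∀ x : ℕ, ¬ Subterm (.var x) t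

/-- The rules of the Dolev-Yao derivation system. -/
inductive Rule : Type where
  | ax | split1 | split2 | sdec | adec | pkR | pairR | sencR | aencR | xorR
  deriving DecidableEq

/-- Proof trees: each node carries a term (its conclusion) and a rule. -/
inductive PTree : Type where
  | node : Term → Rule → List PTree → PTree

/-- The conclusion of a proof: the term at its root. -/
def PTree.conc : PTree → Term
  | .node t _ _ => t

/-- The last rule of a proof: the rule at its root. -/
def PTree.rule : PTree → Rule
  | .node _ r _ => r

/-- `IsProof X π` says that `π` is a derivation (proof) of `X ⊢ conc(π)`:
every node is labelled by a normalized term and is a correct instance of a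
Dolev-Yao rule, and `ax`-leaves are labelled by terms of `X`. -/
inductive IsProof (X : Set Term) : PTree → Prop where
  | ax {t : Term} : t ∈ X → nf t = t → IsProof X (.node t .ax [])
  | split1 {t u : Term} {δ : PTree} :
      IsProof X δ → δ.conc = .pair t u → IsProof X (.node t .split1 [δ])
  | split2 {t u : Term} {δ : PTree} :
      IsProof X δ → δ.conc = .pair t u → IsProof X (.node u .split2 [δ])
  | sdec {t v : Term} {δ₁ δ₂ : PTree} :
      IsProof X δ₁ → IsProof X δ₂ → δ₁.conc = .senc t v → δ₂.conc = v →
      IsProof X (.node t .sdec [δ₁, δ₂])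
  | adec {t : Term} {k : ℕ} {δ₁ δ₂ : PTree} :
      IsProof X δ₁ → IsProof X δ₂ → δ₁.conc = .aenc t (.pk (.name k)) →
      δ₂.conc = .name k → IsProof X (.node t .adec [δ₁, δ₂])
  | pkR {k : ℕ} {δ : PTree} :
      IsProof X δ → δ.conc = .name k → IsProof X (.node (.pk (.name k)) .pkR [δ])
  | pairR {δ₁ δ₂ : PTree} :
      IsProof X δ₁ → IsProof X δ₂ →
      IsProof X (.node (.pair δ₁.conc δ₂.conc) .pairR [δ₁, δ₂])
  | sencR {δ₁ δ₂ : PTree} :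
      IsProof X δ₁ → IsProof X δ₂ →
      IsProof X (.node (.senc δ₁.conc δ₂.conc) .sencR [δ₁, δ₂])
  | aencR {k : ℕ} {δ₁ δ₂ : PTree} :
      IsProof X δ₁ → IsProof X δ₂ → δ₂.conc = .pk (.name k) →
      IsProof X (.node (.aenc δ₁.conc (.pk (.name k))) .aencR [δ₁, δ₂])
  | xorR {l : List PTree} :
      (∀ δ ∈ l, IsProof X δ) →
      IsProof X (.node (nf (.xor (l.map PTree.conc))) .xorR l)

/-- `X ⊢_dy t`: there is a proof of `X ⊢ t`. -/
def Derives (X : Set Term) (t : Term) : Prop :=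
  ∃ π : PTree, IsProof X π ∧ π.conc = t

/-- The subproof (subtree) relation on proof trees. -/
inductive Subproof : PTree → PTree → Prop where
  | refl (π : PTree) : Subproof π π
  | child {π δ : PTree} {t : Term} {r : Rule} {l : List PTree} :
      δ ∈ l → Subproof π δ → Subproof π (.node t r l)

/-- `terms(π)`: the set of terms labelling the nodes of `π`. -/
def termsOf (π : PTree) : Set Term := {u | ∃ δ : PTree, Subproof δ π ∧ δ.conc = u}

/-- `axioms(π)`: the set of terms labelling the `ax`-leaves of `π`. -/
def axiomsOf (π : PTree) : Set Term :=
  {u | ∃ δ : PTree, Subproof δ π ∧ δ.rule = .ax ∧ δ.conc = u}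

/-- The constructor rules `pk`, `pair`, `senc`, `aenc`. -/
def Rule.IsConstructor (r : Rule) : Prop :=
  r = .pkR ∨ r = .pairR ∨ r = .sencR ∨ r = .aencR

/-- The destructor rules `split`, `sdec`, `adec` (excluding `xor_d`). -/
def Rule.IsBasicDestructor (r : Rule) : Prop :=
  r = .split1 ∨ r = .split2 ∨ r = .sdec ∨ r = .adec

/-- A proof ends in a destructor if its last rule is `split`/`sdec`/`adec`,
or is an `xor` with standard conclusion (`xor_d`). -/
def PTree.EndsInDestructor (π : PTree) : Prop :=
  π.rule.IsBasicDestructor ∨ (π.rule = .xorR ∧ π.conc.IsStandard)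

/-- Normal proofs: (1) no occurrence of `split`/`sdec`/`adec` has its leftmost
(major) premise derived by a constructor rule; (2) in every occurrence of the
`xor` rule, no two premises are equal, no premise equals the conclusion, and no
premise is derived by an `xor` rule. -/
inductive Normal : PTree → Prop where
  | mk {t : Term} {r : Rule} {l : List PTree} :
      (∀ δ ∈ l, Normal δ) →
      (r.IsBasicDestructor → ∀ δ₁ ∈ l.head?, ¬ δ₁.rule.IsConstructor) →
      (r = .xorR →
        (l.map PTree.conc).Nodup ∧ (∀ δ ∈ l, δ.conc ≠ t) ∧ (∀ δ ∈ l, δ.rule ≠ .xorR)) →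
      Normal (.node t r l)

/-- `RuleStep Y u`: `u` is the conclusion of a rule instance all of whose
premises lie in `Y`. -/
inductive RuleStep (Y : Set Term) : Term → Prop where
  | split1 {t u : Term} : Term.pair t u ∈ Y → RuleStep Y t
  | split2 {t u : Term} : Term.pair t u ∈ Y → RuleStep Y u
  | sdec {t v : Term} : Term.senc t v ∈ Y → v ∈ Y → RuleStep Y t
  | adec {t : Term} {k : ℕ} : Term.aenc t (.pk (.name k)) ∈ Y → Term.name k ∈ Y → RuleStep Y t
  | pkR {k : ℕ} : Term.name k ∈ Y → RuleStep Y (.pk (.name k))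
  | pairR {u v : Term} : u ∈ Y → v ∈ Y → RuleStep Y (.pair u v)
  | sencR {u v : Term} : u ∈ Y → v ∈ Y → RuleStep Y (.senc u v)
  | aencR {u : Term} {k : ℕ} : u ∈ Y → Term.pk (.name k) ∈ Y → RuleStep Y (.aenc u (.pk (.name k)))
  | xorR {l : List Term} : (∀ s ∈ l, s ∈ Y) → RuleStep Y (nf (.xor l))

/-- `one-step(Y)` relative to the ambient set `st`. -/
def oneStep (st : Set Term) (Y : Set Term) : Set Term :=
  Y ∪ {u ∈ st | RuleStep Y u}

/-- Relabel every node of a proof tree by applying `g` to its term. -/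
def mapTree (g : Term → Term) : PTree → PTree
  | .node t r l => .node (g t) r (l.attach.map fun d => mapTree g d.1)
decreasing_by
  have := List.sizeOf_lt_of_mem d.2
  simp only [PTree.node.sizeOf_spec]
  omega

attribute [local instance] Classical.propDecidable

/-- `zap` relative to a set `T` of terms (to be instantiated with `nf(Dσ)`):
`zap(a) = a` for atomic `a`; `zap(t) = 0` for zappable `t` (a non-atomic
standard term with `nf(t) ∉ T`); otherwise `zap` is applied to the arguments
and the result is normalized. -/
noncomputable def zap (T : Set Term) : Term → Term
  | .var x => .var x
  | .name a => .name a
  | .pk u => if nf (.pk u) ∈ T then nf (.pk (zap T u)) else Term.zero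
  | .pair u v => if nf (.pair u v) ∈ T then nf (.pair (zap T u) (zap T v)) else Term.zero
  | .senc u v => if nf (.senc u v) ∈ T then nf (.senc (zap T u) (zap T v)) else Term.zero
  | .aenc u v => if nf (.aenc u v) ∈ T then nf (.aenc (zap T u) (zap T v)) else Term.zero
  | .xor M => nf (.xor (M.attach.map fun u => zap T u.1))
decreasing_by
  all_goals first
  | (have := List.sizeOf_lt_of_mem u.2; simp only [Term.xor.sizeOf_spec]; omega)
  | (simp only [Term.pk.sizeOf_spec, Term.pair.sizeOf_spec, Term.senc.sizeOf_spec,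
      Term.aenc.sizeOf_spec]; omega)

/-- A proof is typed if each of its subproofs either ends in a constructor
rule, or has a typed conclusion (a member of `T = nf(Dσ)`), or has a
non-standard conclusion. -/
def TypedProof (T : Set Term) (π : PTree) : Prop :=
  ∀ δ : PTree, Subproof δ π → δ.rule.IsConstructor ∨ δ.conc ∈ T ∨ ¬ δ.conc.IsStandard

/-- A role: initial knowledge together with a sequence of (receive, send) pairs. -/
structure Role : Type where
  know : Set Term
  seq : List (Term × Term)

/-- The variables of a list of (receive, send) pairs. -/
def varsRS (ρ : List (Term × Term)) : Set ℕ :=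
  {x | ∃ p ∈ ρ, Subterm (.var x) p.1 ∨ Subterm (.var x) p.2}

/-- The agent variables of a role sequence: the variables that first occur in
a send, i.e. `⋃_i (vars(s_i) \ vars({r_1, …, r_i}))`. -/
def varsA (ρ : List (Term × Term)) : Set ℕ :=
  {x | ∃ i : Fin ρ.length, Subterm (.var x) (ρ.get i).2 ∧
        ∀ j : Fin ρ.length, j.1 ≤ i.1 → ¬ Subterm (.var x) (ρ.get j).1}

/-- The intruder variables of a role sequence. -/
def varsI (ρ : List (Term × Term)) : Set ℕ := varsRS ρ \ varsA ρ

/-- Well-formed roles: the initial knowledge is a finite set of standard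
normalized terms whose variables are agent variables, and every send is
derivable from the initial knowledge together with the receives up to that
point. -/
def Role.WF (R : Role) : Prop :=
  R.know.Finite ∧
  (∀ t ∈ R.know, t.IsStandard ∧ nf t = t) ∧
  (∀ t ∈ R.know, ∀ x : ℕ, Subterm (.var x) t → x ∈ varsA R.seq) ∧
  ∀ i : Fin R.seq.length,
    Derives (R.know ∪ {u | ∃ j : Fin R.seq.length, j.1 ≤ i.1 ∧ u = (R.seq.get j).1})
      (R.seq.get i).2

/-- A protocol: the intruder's initial knowledge and a finite list of roles. -/
structure Protocol : Type where
  init : Set Term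
  roles : List Role

/-- Well-formed protocols: the initial knowledge is a finite set of normalized
ground terms, and all roles are well-formed. -/
def Protocol.WF (P : Protocol) : Prop :=
  P.init.Finite ∧ (∀ t ∈ P.init, nf t = t ∧ Ground t) ∧ ∀ R ∈ P.roles, R.WF

/-- The instantiation `ρτ` of a role sequence by a substitution. -/
def instSeq (R : Role) (τ : ℕ → Term) : List (Term × Term) :=
  R.seq.map fun p => (subst τ p.1, subst τ p.2)

/-- A session of a protocol: a role together with a substitution sending agent
variables to names and intruder variables to variables, with the instantiated
sequence consisting of normalized terms. -/
def IsSession (P : Protocol) (R : Role) (τ : ℕ → Term) : Prop :=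
  R ∈ P.roles ∧
  (∀ x ∈ varsA R.seq, ∃ a : ℕ, τ x = .name a) ∧
  (∀ x ∈ varsI R.seq, ∃ y : ℕ, τ x = .var y) ∧
  (∀ p ∈ instSeq R τ, nf p.1 = p.1 ∧ nf p.2 = p.2)

/-- Two sessions are coherent if their instantiated sequences share no variables. -/
def Coherent (s₁ s₂ : Role × (ℕ → Term)) : Prop :=
  ∀ x : ℕ, ¬ (x ∈ varsRS (instSeq s₁.1 s₁.2) ∧ x ∈ varsRS (instSeq s₂.1 s₂.2))

/-- `Interleave ls l`: `l` is an interleaving of the lists in `ls`. -/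
inductive Interleave {α : Type} : List (List α) → List α → Prop where
  | nil {ls : List (List α)} : (∀ l ∈ ls, l = []) → Interleave ls []
  | cons {ls : List (List α)} {i : Fin ls.length} {x : α} {xs ys : List α} :
      ls.get i = x :: xs → Interleave (ls.set i xs) ys → Interleave ls (x :: ys)

/-- The set `X_i` of a run: the initial knowledge `X₀` together with the first
`i` sent messages of `ξ`. -/
def runKnow (P : Protocol) (ξ : List (Term × Term)) (i : ℕ) : Set Term :=
  P.init ∪ {u | ∃ j : Fin ξ.length, j.1 < i ∧ u = (ξ.get j).2}

/-- `nf(Xσ) = {nf(tσ) : t ∈ X}`. -/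
def nfSubst (σ : ℕ → Term) (X : Set Term) : Set Term :=
  {u | ∃ t ∈ X, u = nf (subst σ t)}

/-- `(ξ, σ)` is a run generated by the pairwise coherent sessions `S` of `P`:
`ξ` is a prefix of an interleaving of the instantiated role sequences, `σ` is
a normalized ground substitution with domain `vars(ξ)`, and each received
message is derivable (after substitution and normalization) from the initial
knowledge together with the previously sent messages. -/
def IsRun (P : Protocol) (S : List (Role × (ℕ → Term)))
    (ξ : List (Term × Term)) (σ : ℕ → Term) : Prop :=
  (∀ s ∈ S, IsSession P s.1 s.2) ∧
  S.Pairwise Coherent ∧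
  (∃ full : List (Term × Term),
      Interleave (S.map fun s => instSeq s.1 s.2) full ∧ ξ.IsPrefix full) ∧
  (∀ x ∈ varsRS ξ, Ground (σ x) ∧ nf (σ x) = σ x) ∧
  (∀ x : ℕ, x ∉ varsRS ξ → σ x = .var x) ∧
  ∀ j : Fin ξ.length,
    Derives (nfSubst σ (runKnow P ξ j.1)) (nf (subst σ (ξ.get j).1))

/-- The set `C` associated with a run: all subterms of the initial knowledge,
the instantiated role knowledges, the messages of the run, and `secret`. -/
def Cset (P : Protocol) (S : List (Role × (ℕ → Term)))
    (ξ : List (Term × Term)) : Set Term :=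
  stSet (P.init ∪ {u | ∃ s ∈ S, ∃ t ∈ s.1.know, u = subst s.2 t} ∪
    {u | ∃ p ∈ ξ, u = p.1 ∨ u = p.2} ∪ {Term.secret})

/-- The set `D ⊆ C` of standard non-variable members of `C`. -/
def Dset (P : Protocol) (S : List (Role × (ℕ → Term)))
    (ξ : List (Term × Term)) : Set Term :=
  {t ∈ Cset P S ξ | t.IsStandard ∧ ∀ x : ℕ, t ≠ .var x}

/-- `nf(Dσ)`: a standard normalized term is *typed* iff it belongs to this set. -/
def TypedSet (P : Protocol) (S : List (Role × (ℕ → Term)))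
    (ξ : List (Term × Term)) (σ : ℕ → Term) : Set Term :=
  nfSubst σ (Dset P S ξ)

/-- `(ξ, σ)` is an attack: a run after which the intruder derives `secret`. -/
def IsAttack (P : Protocol) (S : List (Role × (ℕ → Term)))
    (ξ : List (Term × Term)) (σ : ℕ → Term) : Prop :=
  IsRun P S ξ σ ∧ Derives (nfSubst σ (runKnow P ξ ξ.length)) Term.secret

/-- `P` has a `K`-bounded attack. -/
def HasBoundedAttack (K : ℕ) (P : Protocol) : Prop :=
  ∃ (S : List (Role × (ℕ → Term))) (ξ : List (Term × Term)) (σ : ℕ → Term),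
    S.length = K ∧ IsAttack P S ξ σ
/-!
Every Dolev-Yao proof can be brought into analysis/synthesis normal form (`Deriv`): destructors
are applied only to terms obtained from `X` by decomposition, a destructor applied to a freshly
composed term being replaced by a premise of the composition. Analysed terms are then subterms
of `X`, hence lie in `C`.

Relabelling a normal proof by `t ↦ nf (tσ)` keeps it correct, because `nf (nf(t)σ) = nf (tσ)`.
Only XOR steps can leave `C`. Their operands are flattened into operands that are standard or lie
in `C`, and operands occurring an even number of times are cancelled; a surviving standard operand
is a factor either of the conclusion or of a non-standard operand, so it lies in `C` too. Pair and
encryption steps then conclude σ-images of standard non-variable members of `C`, that is, of `D`.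
-/

/-! ### Lists up to parity of multiplicities -/

section Lists

variable {α β : Type} [DecidableEq β]

def ParityEq [DecidableEq α] (L₁ L₂ : List α) : Prop := ∀ a, L₁.count a % 2 = L₂.count a % 2

theorem ParityEq.refl [DecidableEq α] (L : List α) : ParityEq L L := fun _ => rfl

theorem ParityEq.symm {L₁ L₂ : List α} [DecidableEq α] (h : ParityEq L₁ L₂) : ParityEq L₂ L₁ :=
  fun a => (h a).symm

theorem ParityEq.trans {L₁ L₂ L₃ : List α} [DecidableEq α] (h₁ : ParityEq L₁ L₂)
    (h₂ : ParityEq L₂ L₃) : ParityEq L₁ L₃ :=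
  fun a => (h₁ a).trans (h₂ a)

theorem ParityEq.append {A A' B B' : List α} [DecidableEq α] (hA : ParityEq A A')
    (hB : ParityEq B B') : ParityEq (A ++ B) (A' ++ B') := by
  intro a
  have := hA a
  have := hB a
  simp only [List.count_append]
  omega

theorem ParityEq.sum_map {L₁ L₂ : List α} [DecidableEq α] (h : ParityEq L₁ L₂) (g : α → ℕ) :
    (L₁.map g).sum % 2 = (L₂.map g).sum % 2 := by
  have heven : Even ((L₁ ++ L₂).map g).sum := by
    rw [Finset.sum_list_map_count]
    refine Finset.even_sum _ fun a _ => ?_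
    rw [smul_eq_mul]
    refine Even.mul_right ?_ _
    have := h a
    rw [List.count_append, Nat.even_iff]
    omega
  rw [List.map_append, List.sum_append, Nat.even_iff] at heven
  omega

theorem ParityEq.flatMap {L₁ L₂ : List α} [DecidableEq α] (h : ParityEq L₁ L₂)
    (f : α → List β) : ParityEq (L₁.flatMap f) (L₂.flatMap f) := by
  intro b
  simp only [List.count_flatMap]
  exact h.sum_map _

theorem parityEq_flatMap_congr {L : List α} {f g : α → List β}
    (h : ∀ a ∈ L, ParityEq (f a) (g a)) : ParityEq (L.flatMap f) (L.flatMap g) := by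
  induction L with
  | nil => exact .refl _
  | cons a L ih =>
    simp only [List.flatMap_cons]
    exact (h a List.mem_cons_self).append (ih fun b hb => h b (List.mem_cons_of_mem a hb))

theorem parityEq_flatMap_filter {L : List α} {p : α → Bool} {f : α → List β}
    (h : ∀ a ∈ L, p a = false → ParityEq (f a) []) :
    ParityEq ((L.filter p).flatMap f) (L.flatMap f) := by
  induction L with
  | nil => exact .refl _
  | cons a L ih =>
    have ih := ih fun b hb => h b (List.mem_cons_of_mem a hb)
    cases hpa : p a
    · simpa [List.filter_cons, hpa] using
        (h a List.mem_cons_self hpa).symm.append ih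
    · simpa [List.filter_cons, hpa] using (ParityEq.refl (f a)).append ih

theorem exists_odd_count_of_odd_count_flatMap {L : List α} {f : α → List β} {b : β}
    (h : (L.flatMap f).count b % 2 = 1) : ∃ a ∈ L, (f a).count b % 2 = 1 := by
  induction L with
  | nil => simp at h
  | cons a L ih =>
    rw [List.flatMap_cons, List.count_append] at h
    by_cases ha : (f a).count b % 2 = 1
    · exact ⟨a, List.mem_cons_self, ha⟩
    · obtain ⟨a', ha', hodd⟩ := ih (by omega)
      exact ⟨a', List.mem_cons_of_mem a ha', hodd⟩

end Lists

/-! ### Normal forms -/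

theorem foldr_pair_injective :
    Function.Injective (List.foldr (fun a b => Nat.pair a b + 1) 0) := by
  intro l₁ l₂ h
  induction l₁ generalizing l₂ with
  | nil => cases l₂ <;> simp_all
  | cons a l ih =>
    cases l₂ with
    | nil => simp at h
    | cons b l₂ =>
      simp only [List.foldr_cons, add_left_inj, Nat.pair_eq_pair] at h
      rw [h.1, ih h.2]

theorem eq_of_map_eq_map {α β : Type} {f : α → β} :
    ∀ {M N : List α}, (∀ m ∈ M, ∀ n, f m = f n → m = n) → M.map f = N.map f → M = N
  | [], [], _, _ => rfl
  | m :: M, n :: N, hf, h => by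
    simp only [List.map_cons, List.cons.injEq] at h
    rw [hf m List.mem_cons_self n h.1,
      eq_of_map_eq_map (fun m' hm' => hf m' (List.mem_cons_of_mem m hm')) h.2]

theorem eq_of_encode_eq {s t : Term} (h : encode s = encode t) : s = t := by
  cases s <;> cases t <;> simp only [encode, add_left_inj, Nat.pair_eq_pair, true_and] at h <;>
    (try omega)
  case var.var | name.name => rw [h]
  case pk.pk => rw [eq_of_encode_eq h]
  case pair.pair | senc.senc | aenc.aenc => rw [eq_of_encode_eq h.1, eq_of_encode_eq h.2]
  case xor.xor M N =>
    simp only [List.attach_map_val] at h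
    rw [eq_of_map_eq_map (fun m _ n => eq_of_encode_eq) (foldr_pair_injective h)]
termination_by sizeOf s

theorem cancel_sublist : ∀ L : List Term, List.Sublist (cancel L) L := by
  intro L
  induction L using cancel.induct with
  | case1 => simp [cancel]
  | case2 a => simp [cancel]
  | case3 a b rest hab ih =>
    rw [cancel, if_pos hab]
    exact ih.trans ((List.sublist_cons_self b rest).trans (List.sublist_cons_self a _))
  | case4 a b rest hab ih =>
    rw [cancel, if_neg hab]
    exact ih.cons_cons a

theorem count_cancel_mod_two (a : Term) :
    ∀ L : List Term, (cancel L).count a % 2 = L.count a % 2 := by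
  intro L
  induction L using cancel.induct with
  | case1 => simp [cancel]
  | case2 b => simp [cancel]
  | case3 b c rest hbc ih =>
    rw [cancel, if_pos hbc, ih, eq_of_encode_eq hbc]
    simp only [List.count_cons]
    split <;> omega
  | case4 b c rest hbc ih =>
    rw [cancel, if_neg hbc, List.count_cons, List.count_cons (l := c :: rest)]
    split <;> omega

theorem nodup_cancel : ∀ {L : List Term}, L.Pairwise (fun a b => encode a ≤ encode b) →
    (cancel L).Nodup := by
  intro L
  induction L using cancel.induct with
  | case1 => simp [cancel]
  | case2 a => simp [cancel]
  | case3 a b rest hab ih =>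
    intro h
    rw [cancel, if_pos hab]
    exact ih (List.pairwise_cons.mp (List.pairwise_cons.mp h).2).2
  | case4 a b rest hab ih =>
    intro h
    rw [cancel, if_neg hab]
    obtain ⟨ha, hbrest⟩ := List.pairwise_cons.mp h
    refine List.nodup_cons.mpr ⟨fun hmem => ?_, ih hbrest⟩
    rcases List.mem_cons.mp ((cancel_sublist _).subset hmem) with rfl | har
    · exact hab rfl
    · exact hab (le_antisymm (ha b List.mem_cons_self) ((List.pairwise_cons.mp hbrest).1 a har))

/-- The elements of odd multiplicity in `L`, in the canonical order. -/
def red (L : List Term) : List Term := cancel (sortT L)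

theorem sortT_pairwise (L : List Term) :
    (sortT L).Pairwise (fun a b => encode a ≤ encode b) := by
  refine (List.pairwise_mergeSort (fun a b c hab hbc => ?_) (fun a b => ?_) L).imp fun h => ?_ <;>
    simp only [Nat.ble_eq, Bool.or_eq_true] at * <;> omega

theorem red_pairwise (L : List Term) : (red L).Pairwise (fun a b => encode a ≤ encode b) :=
  (sortT_pairwise L).sublist (cancel_sublist _)

theorem red_nodup (L : List Term) : (red L).Nodup := nodup_cancel (sortT_pairwise L)

theorem parityEq_red (L : List Term) : ParityEq (red L) L := fun a => by
  rw [red, count_cancel_mod_two, sortT, (List.mergeSort_perm _ _).count_eq]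

theorem mem_of_mem_red {L : List Term} {a : Term} (h : a ∈ red L) : a ∈ L :=
  (List.mergeSort_perm L _).mem_iff.mp ((cancel_sublist _).subset h)

theorem mem_red_iff {L : List Term} {a : Term} : a ∈ red L ↔ L.count a % 2 = 1 := by
  rw [← parityEq_red L a, (red_nodup L).count]
  split <;> simp_all

theorem red_eq_of_parityEq {L₁ L₂ : List Term} (h : ParityEq L₁ L₂) : red L₁ = red L₂ := by
  refine List.Perm.eq_of_pairwise (fun a b _ _ hab hba => eq_of_encode_eq (le_antisymm hab hba))
    (red_pairwise L₁) (red_pairwise L₂) ?_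
  rw [List.perm_ext_iff_of_nodup (red_nodup _) (red_nodup _)]
  intro a
  rw [mem_red_iff, mem_red_iff, h a]

theorem red_red (L : List Term) : red (red L) = red L := red_eq_of_parityEq (parityEq_red L)

theorem red_nil : red [] = [] := by simp [red, sortT, cancel]

theorem red_singleton (a : Term) : red [a] = [a] := by simp [red, sortT, cancel]

theorem red_eq_nil_iff {L : List Term} : red L = [] ↔ ParityEq L [] := by
  refine ⟨fun h => h ▸ (parityEq_red L).symm, fun h => ?_⟩
  rw [red_eq_of_parityEq h, red_nil]

theorem facL_xor (M : List Term) : facL (.xor M) = M.flatMap facL := by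
  rw [facL]
  simp only [List.flatMap_subtype, List.unattach_attach]

theorem facL_of_isStandard {t : Term} (h : t.IsStandard) : facL t = [t] := by
  cases t <;> first | exact False.elim h | rw [facL]

theorem eq_of_mem_facL {t w : Term} (hw : w ∈ facL t) (ht : t.IsStandard) : w = t :=
  List.mem_singleton.mp (facL_of_isStandard ht ▸ hw)

theorem isFactor_of_mem_facL : ∀ {t u : Term}, u ∈ facL t → IsFactor u t
  | .xor M, _, h => by
    obtain ⟨m, hm, h⟩ := List.mem_flatMap.mp (facL_xor M ▸ h)
    exact .xor hm (isFactor_of_mem_facL h)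
  | .var _, _, h | .name _, _, h | .pk _, _, h | .pair _ _, _, h | .senc _ _, _, h
  | .aenc _ _, _, h => by
    rw [facL, List.mem_singleton] at h
    subst h
    exact .std trivial

theorem isStandard_of_isFactor {t u : Term} (h : IsFactor u t) : u.IsStandard := by
  induction h <;> assumption

theorem isStandard_of_mem_facL {t u : Term} (h : u ∈ facL t) : u.IsStandard :=
  isStandard_of_isFactor (isFactor_of_mem_facL h)

theorem Subterm.trans {a b c : Term} (hab : Subterm a b) (hbc : Subterm b c) : Subterm a c := by
  induction hbc with
  | refl => exact hab
  | pk _ ih => exact .pk ih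
  | pair_l _ ih => exact .pair_l ih
  | pair_r _ ih => exact .pair_r ih
  | senc_l _ ih => exact .senc_l ih
  | senc_r _ ih => exact .senc_r ih
  | aenc_l _ ih => exact .aenc_l ih
  | aenc_r _ ih => exact .aenc_r ih
  | xor hf _ ih => exact .xor hf ih

def SubtermClosed (C : Set Term) : Prop := ∀ ⦃a b : Term⦄, Subterm a b → b ∈ C → a ∈ C

theorem subterm_of_mem_facL {t u : Term} (h : u ∈ facL t) : Subterm u t := by
  cases t with
  | xor M => exact .xor (isFactor_of_mem_facL h) (.refl u)
  | _ =>
    rw [facL, List.mem_singleton] at h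
    subst h
    exact .refl _

@[simp] theorem nf_var (x : ℕ) : nf (.var x) = .var x := by rw [nf]
@[simp] theorem nf_name (a : ℕ) : nf (.name a) = .name a := by rw [nf]
@[simp] theorem nf_pk (u : Term) : nf (.pk u) = .pk (nf u) := by rw [nf]
@[simp] theorem nf_pair (u v : Term) : nf (.pair u v) = .pair (nf u) (nf v) := by rw [nf]
@[simp] theorem nf_senc (u v : Term) : nf (.senc u v) = .senc (nf u) (nf v) := by rw [nf]
@[simp] theorem nf_aenc (u v : Term) : nf (.aenc u v) = .aenc (nf u) (nf v) := by rw [nf]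

theorem isStandard_nf {t : Term} (h : t.IsStandard) : (nf t).IsStandard := by
  cases t <;> first
    | exact False.elim h
    | (simp only [nf_var, nf_name, nf_pk, nf_pair, nf_senc, nf_aenc]; trivial)

def nfac (t : Term) : List Term := (facL t).map nf

theorem nfac_of_isStandard {t : Term} (h : t.IsStandard) : nfac t = [nf t] := by
  rw [nfac, facL_of_isStandard h, List.map_singleton]

theorem nfac_xor (M : List Term) : nfac (.xor M) = M.flatMap nfac := by
  rw [nfac, facL_xor, List.map_flatMap]
  rfl

theorem nf_eq_xorOf_red (t : Term) : nf t = xorOf (red (nfac t)) := by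
  cases t with
  | xor M =>
    rw [nf, nfac, red]
    simp only [List.map_subtype, List.unattach_attach]
  | _ => rw [nfac, facL, List.map_singleton, red_singleton]; rfl

theorem nf_eq_of_parityEq {s₁ s₂ : Term} (h : ParityEq (nfac s₁) (nfac s₂)) : nf s₁ = nf s₂ := by
  rw [nf_eq_xorOf_red, nf_eq_xorOf_red s₂, red_eq_of_parityEq h]

theorem facL_xorOf {R : List Term} (h : ∀ a ∈ R, a.IsStandard) (hne : R ≠ []) :
    facL (xorOf R) = R := by
  match R, hne with
  | [a], _ => exact facL_of_isStandard (h a List.mem_cons_self)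
  | a :: b :: R, _ =>
    change facL (.xor (a :: b :: R)) = _
    rw [facL_xor]
    exact (List.flatMap_congr fun x hx => facL_of_isStandard (h x hx)).trans
      (List.flatMap_singleton' _)

theorem nf_xorOf_red {L : List Term} (h : ∀ a ∈ L, a.IsStandard ∧ nf a = a) :
    nf (xorOf (red L)) = xorOf (red L) := by
  by_cases hne : red L = []
  · rw [hne]
    exact nf_name 0
  · have hR : ∀ a ∈ red L, a.IsStandard ∧ nf a = a := fun a ha => h a (mem_of_mem_red ha)
    rw [nf_eq_xorOf_red, nfac, facL_xorOf (fun a ha => (hR a ha).1) hne,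
      List.map_congr_left (fun a ha => (hR a ha).2), List.map_id', red_red]

theorem nf_nf : ∀ t : Term, nf (nf t) = nf t
  | .xor M => by
    rw [nf_eq_xorOf_red (.xor M)]
    refine nf_xorOf_red fun a ha => ?_
    obtain ⟨f, hf, rfl⟩ := List.mem_map.mp ha
    exact ⟨isStandard_nf (isStandard_of_mem_facL hf), nf_nf f⟩
  | .var _ | .name _ => by simp only [nf_var, nf_name]
  | .pk u => by rw [nf_pk, nf_pk, nf_nf u]
  | .pair u v => by rw [nf_pair, nf_pair, nf_nf u, nf_nf v]
  | .senc u v => by rw [nf_senc, nf_senc, nf_nf u, nf_nf v]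
  | .aenc u v => by rw [nf_aenc, nf_aenc, nf_nf u, nf_nf v]
decreasing_by all_goals first | exact sizeOf_lt_of_mem_facL_xor M f hf | decreasing_tactic

theorem isStandard_nf_of_mem_nfac {t a : Term} (h : a ∈ nfac t) : a.IsStandard ∧ nf a = a := by
  obtain ⟨f, hf, rfl⟩ := List.mem_map.mp h
  exact ⟨isStandard_nf (isStandard_of_mem_facL hf), nf_nf f⟩

theorem facL_nf {t : Term} (h : red (nfac t) ≠ []) : facL (nf t) = red (nfac t) := by
  rw [nf_eq_xorOf_red t]
  exact facL_xorOf (fun a ha => (isStandard_nf_of_mem_nfac (mem_of_mem_red ha)).1) h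

theorem nfac_nf {t : Term} (h : red (nfac t) ≠ []) : nfac (nf t) = red (nfac t) := by
  rw [nfac, facL_nf h]
  exact (List.map_congr_left fun a ha => (isStandard_nf_of_mem_nfac (mem_of_mem_red ha)).2).trans
    (List.map_id _)

theorem nf_eq_zero {t : Term} (h : red (nfac t) = []) : nf t = .zero := by
  rw [nf_eq_xorOf_red, h]
  rfl

theorem mem_facL_nf {t a : Term} (h : a ∈ red (nfac t)) : a ∈ facL (nf t) := by
  rwa [facL_nf (List.ne_nil_of_mem h)]

theorem mem_red_of_mem_facL_nf {t a : Term} (h : a ∈ facL (nf t)) (ha : a ≠ .zero) :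
    a ∈ red (nfac t) := by
  by_cases hr : red (nfac t) = []
  · rw [nf_eq_zero hr, Term.zero, facL, List.mem_singleton] at h
    exact absurd h ha
  · rwa [facL_nf hr] at h

@[simp] theorem subst_name (σ : ℕ → Term) (a : ℕ) : subst σ (.name a) = .name a := by rw [subst]
@[simp] theorem subst_pk (σ : ℕ → Term) (u : Term) : subst σ (.pk u) = .pk (subst σ u) := by
  rw [subst]
@[simp] theorem subst_pair (σ : ℕ → Term) (u v : Term) :
    subst σ (.pair u v) = .pair (subst σ u) (subst σ v) := by rw [subst]
@[simp] theorem subst_senc (σ : ℕ → Term) (u v : Term) :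
    subst σ (.senc u v) = .senc (subst σ u) (subst σ v) := by rw [subst]
@[simp] theorem subst_aenc (σ : ℕ → Term) (u v : Term) :
    subst σ (.aenc u v) = .aenc (subst σ u) (subst σ v) := by rw [subst]

theorem subst_xor (σ : ℕ → Term) (M : List Term) :
    subst σ (.xor M) = .xor (M.map (subst σ)) := by
  rw [subst]
  simp only [List.map_subtype, List.unattach_attach]

theorem nfac_subst (σ : ℕ → Term) :
    ∀ t : Term, nfac (subst σ t) = (facL t).flatMap (nfac ∘ subst σ)
  | .xor M => by
    rw [subst_xor, nfac_xor, facL_xor, List.flatMap_assoc, List.flatMap_map]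
    exact List.flatMap_congr fun m _ => nfac_subst σ m
  | .var _ | .name _ | .pk _ | .pair _ _ | .senc _ _ | .aenc _ _ => by
    rw [facL, List.flatMap_singleton]
    rfl

theorem nfac_eq_of_nf_eq {s s' : Term} (hs : s.IsStandard) (hs' : s'.IsStandard)
    (h : nf s = nf s') : nfac s = nfac s' := by
  rw [nfac_of_isStandard hs, nfac_of_isStandard hs', h]

/-- The only subtle case is a variable factor, which `σ` may replace by an XOR whose factors
cancel against other ones. -/
theorem nf_subst_nf (σ : ℕ → Term) : ∀ t : Term, nf (subst σ (nf t)) = nf (subst σ t)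
  | .xor M => by
    have hfac : ∀ f ∈ facL (.xor M), nfac (subst σ (nf f)) = nfac (subst σ f) := by
      intro f hf
      have ih := nf_subst_nf σ f
      cases f with
      | var x => rw [nf_var]
      | xor N => exact absurd (isStandard_of_mem_facL hf) id
      | _ => exact nfac_eq_of_nf_eq (by simp [Term.IsStandard]) (by simp [Term.IsStandard]) ih
    have hpar : ParityEq (nfac (subst σ (.xor M)))
        ((red (nfac (.xor M))).flatMap (nfac ∘ subst σ)) := by
      have : nfac (subst σ (.xor M)) = (nfac (.xor M)).flatMap (nfac ∘ subst σ) := by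
        rw [nfac_subst, nfac, List.flatMap_map]
        exact List.flatMap_congr fun f hf => (hfac f hf).symm
      rw [this]
      exact (parityEq_red _).symm.flatMap _
    by_cases hR : red (nfac (.xor M)) = []
    · rw [hR, List.flatMap_nil] at hpar
      rw [nf_eq_zero hR, nf_eq_zero (red_eq_nil_iff.mpr hpar)]
      simp only [Term.zero, subst_name, nf_name]
    · rw [nf_eq_xorOf_red (.xor M)]
      refine nf_eq_of_parityEq ?_
      rw [nfac_subst,
        facL_xorOf (fun a ha => (isStandard_nf_of_mem_nfac (mem_of_mem_red ha)).1) hR]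
      exact hpar.symm
  | .var _ | .name _ => by simp only [nf_var, nf_name]
  | .pk u => by simp only [nf_pk, subst_pk, nf_subst_nf σ u]
  | .pair u v => by simp only [nf_pair, subst_pair, nf_subst_nf σ u, nf_subst_nf σ v]
  | .senc u v => by simp only [nf_senc, subst_senc, nf_subst_nf σ u, nf_subst_nf σ v]
  | .aenc u v => by simp only [nf_aenc, subst_aenc, nf_subst_nf σ u, nf_subst_nf σ v]
decreasing_by all_goals first | exact sizeOf_lt_of_mem_facL_xor M f hf | decreasing_tactic

/-- Operands sent to `0` by `σ` have to be dropped: `nf` keeps `0 = nf (.xor [])` as a factor. -/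
theorem nf_xor_filter_map_nf_subst (σ : ℕ → Term) (L : List Term) :
    nf (.xor ((L.filter fun q => decide (red (nfac (subst σ q)) ≠ [])).map (nf ∘ subst σ)))
      = nf (subst σ (.xor L)) := by
  refine nf_eq_of_parityEq ?_
  rw [nfac_xor, List.flatMap_map, subst_xor, nfac_xor, List.flatMap_map]
  refine (parityEq_flatMap_congr fun q hq => ?_).trans (parityEq_flatMap_filter fun q _ hq => ?_)
  · rw [Function.comp_apply, nfac_nf (of_decide_eq_true (List.mem_filter.mp hq).2)]
    exact parityEq_red _
  · exact red_eq_nil_iff.mp (not_not.mp (of_decide_eq_false hq))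

/-- A standard operand either survives as a factor of `w` or cancels against a factor of another,
non-standard, operand. -/
theorem mem_of_parityEq_nfac {C : Set Term} (hC : SubtermClosed C) {w : Term} {L : List Term}
    (hw : w ∈ C) (hwn : nf w = w) (hL : L.Nodup) (hnf : ∀ q ∈ L, nf q = q)
    (hns : ∀ q ∈ L, ¬ q.IsStandard → q ∈ C) (hLw : ParityEq (nfac (.xor L)) (nfac w)) :
    ∀ q ∈ L, q ∈ C := by
  intro q hq
  by_cases hqs : q.IsStandard
  swap
  · exact hns q hq hqs
  have hcount : (nfac (.xor L)).count q = 1 + ((L.erase q).flatMap nfac).count q := by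
    rw [nfac_xor, ((List.perm_cons_erase hq).flatMap_right nfac).count_eq, List.flatMap_cons,
      List.count_append, nfac_of_isStandard hqs, hnf q hq, List.count_singleton_self]
  by_cases hodd : (nfac w).count q % 2 = 1
  · have hqw := mem_facL_nf (mem_red_iff.mpr hodd)
    rw [hwn] at hqw
    exact hC (subterm_of_mem_facL hqw) hw
  · obtain ⟨p, hp, hpq⟩ := exists_odd_count_of_odd_count_flatMap (L := L.erase q) (f := nfac)
      (b := q) (by have := hLw q; omega)
    have hpL := List.mem_of_mem_erase hp
    have hqp := mem_facL_nf (mem_red_iff.mpr hpq)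
    rw [hnf p hpL] at hqp
    have hps : ¬ p.IsStandard := fun hps => hL.not_mem_erase (eq_of_mem_facL hqp hps ▸ hp)
    exact hC (subterm_of_mem_facL hqp) (hns p hpL hps)

/-! ### Normal derivations -/

def Rule.IsPairOrEnc (r : Rule) : Prop := r = .pairR ∨ r = .aencR ∨ r = .sencR

inductive Mode
  | analz
  | synth

/-- Analysis/synthesis normal form of derivations. The rule `factor` stands for an XOR step that
extracts a factor of an analysed term. -/
inductive Deriv (X : Set Term) : Mode → Term → Prop
  | ax {u : Term} : u ∈ X → nf u = u → Deriv X .analz u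
  | split1 {t u : Term} : Deriv X .analz (.pair t u) → Deriv X .analz t
  | split2 {t u : Term} : Deriv X .analz (.pair t u) → Deriv X .analz u
  | sdec {t v : Term} : Deriv X .analz (.senc t v) → Deriv X .synth v → Deriv X .analz t
  | adec {t : Term} {k : ℕ} :
      Deriv X .analz (.aenc t (.pk (.name k))) → Deriv X .synth (.name k) → Deriv X .analz t
  | factor {v w : Term} : Deriv X .analz v → w ∈ facL v → Deriv X .synth w → Deriv X .analz w
  | analz {u : Term} : Deriv X .analz u → Deriv X .synth u
  | pk {k : ℕ} : Deriv X .synth (.name k) → Deriv X .synth (.pk (.name k))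
  | pair {u v : Term} : Deriv X .synth u → Deriv X .synth v → Deriv X .synth (.pair u v)
  | senc {u v : Term} : Deriv X .synth u → Deriv X .synth v → Deriv X .synth (.senc u v)
  | aenc {u : Term} {k : ℕ} :
      Deriv X .synth u → Deriv X .synth (.pk (.name k)) → Deriv X .synth (.aenc u (.pk (.name k)))
  | xor {l : List Term} : (∀ q ∈ l, Deriv X .synth q) → Deriv X .synth (nf (.xor l))

inductive Composed (X : Set Term) : Term → Prop
  | pk {k : ℕ} : Deriv X .synth (.name k) → Composed X (.pk (.name k))
  | pair {u v : Term} : Deriv X .synth u → Deriv X .synth v → Composed X (.pair u v)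
  | senc {u v : Term} : Deriv X .synth u → Deriv X .synth v → Composed X (.senc u v)
  | aenc {u : Term} {k : ℕ} :
      Deriv X .synth u → Deriv X .synth (.pk (.name k)) → Composed X (.aenc u (.pk (.name k)))

namespace Deriv

variable {X : Set Term}

theorem nf_eq {m : Mode} {u : Term} (h : Deriv X m u) : nf u = u := by
  induction h with
  | ax _ hn => exact hn
  | split1 _ ih | split2 _ ih => simp only [nf_pair, Term.pair.injEq] at ih; simp [ih]
  | sdec _ _ ih _ => simp only [nf_senc, Term.senc.injEq] at ih; exact ih.1
  | adec _ _ ih _ => simp only [nf_aenc, Term.aenc.injEq] at ih; exact ih.1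
  | factor _ _ _ _ ih | analz _ ih => exact ih
  | pk => simp
  | pair _ _ ih₁ ih₂ | senc _ _ ih₁ ih₂ => simp [ih₁, ih₂]
  | aenc _ _ ih => simp [ih]
  | xor => exact nf_nf _

theorem factor_cases {m : Mode} {v : Term} (h : Deriv X m v) :
    ∀ w ∈ facL v, w ≠ .zero → (∃ v', Deriv X .analz v' ∧ w ∈ facL v') ∨ Composed X w := by
  induction h with
  | @xor l hl ih =>
    intro w hw hw0
    have hodd := mem_red_iff.mp (mem_red_of_mem_facL_nf hw hw0)
    rw [nfac_xor] at hodd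
    obtain ⟨q, hq, hoddq⟩ := exists_odd_count_of_odd_count_flatMap hodd
    have hwq := mem_facL_nf (mem_red_iff.mpr hoddq)
    rw [(hl q hq).nf_eq] at hwq
    exact ih q hq w hwq hw0
  | pk h _ => exact fun w hw _ => by obtain rfl := eq_of_mem_facL hw trivial; exact .inr (.pk h)
  | pair h₁ h₂ _ _ =>
    exact fun w hw _ => by obtain rfl := eq_of_mem_facL hw trivial; exact .inr (.pair h₁ h₂)
  | senc h₁ h₂ _ _ =>
    exact fun w hw _ => by obtain rfl := eq_of_mem_facL hw trivial; exact .inr (.senc h₁ h₂)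
  | aenc h₁ h₂ _ _ =>
    exact fun w hw _ => by obtain rfl := eq_of_mem_facL hw trivial; exact .inr (.aenc h₁ h₂)
  | analz h _ => exact fun w hw _ => .inl ⟨_, h, hw⟩
  | ax hu hn => exact fun w hw _ => .inl ⟨_, .ax hu hn, hw⟩
  | split1 h _ => exact fun w hw _ => .inl ⟨_, .split1 h, hw⟩
  | split2 h _ => exact fun w hw _ => .inl ⟨_, .split2 h, hw⟩
  | sdec h₁ h₂ _ _ => exact fun w hw _ => .inl ⟨_, .sdec h₁ h₂, hw⟩
  | adec h₁ h₂ _ _ => exact fun w hw _ => .inl ⟨_, .adec h₁ h₂, hw⟩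
  | factor h₁ h₂ h₃ _ _ => exact fun w hw _ => .inl ⟨_, .factor h₁ h₂ h₃, hw⟩

theorem analz_or_composed {w : Term} (h : Deriv X .synth w) (hs : w.IsStandard)
    (hw : w ≠ .zero) : Deriv X .analz w ∨ Composed X w :=
  (h.factor_cases w (by rw [facL_of_isStandard hs]; exact List.mem_singleton_self w) hw).imp_left
    fun ⟨_, hv, hwv⟩ => .factor hv hwv h

end Deriv

theorem IsProof.deriv {X : Set Term} {π : PTree} (h : IsProof X π) :
    Deriv X .synth π.conc := by
  induction h with
  | ax hX hn => exact .analz (.ax hX hn)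
  | split1 _ hc ih =>
    rw [hc] at ih
    rcases ih.analz_or_composed trivial (by simp [Term.zero]) with hA | hC
    · exact .analz (.split1 hA)
    · cases hC with | pair h₁ _ => exact h₁
  | split2 _ hc ih =>
    rw [hc] at ih
    rcases ih.analz_or_composed trivial (by simp [Term.zero]) with hA | hC
    · exact .analz (.split2 hA)
    · cases hC with | pair _ h₂ => exact h₂
  | sdec _ _ hc₁ hc₂ ih₁ ih₂ =>
    rw [hc₁] at ih₁
    rw [hc₂] at ih₂
    rcases ih₁.analz_or_composed trivial (by simp [Term.zero]) with hA | hC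
    · exact .analz (.sdec hA ih₂)
    · cases hC with | senc h₁ _ => exact h₁
  | adec _ _ hc₁ hc₂ ih₁ ih₂ =>
    rw [hc₁] at ih₁
    rw [hc₂] at ih₂
    rcases ih₁.analz_or_composed trivial (by simp [Term.zero]) with hA | hC
    · exact .analz (.adec hA ih₂)
    · cases hC with | aenc h₁ _ => exact h₁
  | pkR _ hc ih => exact .pk (hc ▸ ih)
  | pairR _ _ ih₁ ih₂ => exact .pair ih₁ ih₂
  | sencR _ _ ih₁ ih₂ => exact .senc ih₁ ih₂
  | aencR _ _ hc ih₁ ih₂ => exact .aenc ih₁ (hc ▸ ih₂)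
  | xorR _ ih =>
    refine .xor fun q hq => ?_
    obtain ⟨δ, hδ, rfl⟩ := List.mem_map.mp hq
    exact ih δ hδ

/-! ### Confined proofs -/

def Confined (A T : Set Term) (π : PTree) : Prop :=
  termsOf π ⊆ A ∧ ∀ δ, Subproof δ π → δ.rule.IsPairOrEnc → δ.conc ∈ T

theorem Confined.node {A T : Set Term} {t : Term} {r : Rule} {l : List PTree} (ht : t ∈ A)
    (hr : r.IsPairOrEnc → t ∈ T) (hl : ∀ p ∈ l, Confined A T p) :
    Confined A T (.node t r l) := by
  constructor
  · rintro _ ⟨δ, hδ, rfl⟩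
    cases hδ with
    | refl => exact ht
    | child hp hδ => exact (hl _ hp).1 ⟨δ, hδ, rfl⟩
  · intro δ hδ hδr
    cases hδ with
    | refl => exact hr hδr
    | child hp hδ => exact (hl _ hp).2 δ hδ hδr

section Construction

variable (σ : ℕ → Term) (X C D : Set Term)

def HasConfinedProof (u : Term) : Prop :=
  ∃ π, IsProof (nfSubst σ X) π ∧ π.conc = nf (subst σ u) ∧
    Confined (nfSubst σ C) (nfSubst σ D) π

def GoodOperand (q : Term) : Prop :=
  nf q = q ∧ (q ∈ C → HasConfinedProof σ X C D q) ∧ (¬ q.IsStandard → q ∈ C)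

def Decomposable (u : Term) : Prop :=
  ∃ L : List Term, ParityEq (nfac (.xor L)) (nfac u) ∧ ∀ q ∈ L, GoodOperand σ X C D q

/-- Synthesised terms outside `C` are only known as XORs, up to parity, of good operands. -/
def Invariant : Mode → Term → Prop
  | .analz, u => u ∈ C ∧ HasConfinedProof σ X C D u
  | .synth, u => (u ∈ C → HasConfinedProof σ X C D u) ∧ Decomposable σ X C D u

variable {σ X C D}

theorem hasConfinedProof_node {u t : Term} {r : Rule} {l : List PTree}
    (hπ : IsProof (nfSubst σ X) (.node t r l)) (ht : t = nf (subst σ u)) (hu : u ∈ C)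
    (hD : r.IsPairOrEnc → u ∈ D) (hl : ∀ p ∈ l, Confined (nfSubst σ C) (nfSubst σ D) p) :
    HasConfinedProof σ X C D u :=
  ⟨_, hπ, ht, .node (ht ▸ ⟨u, hu, rfl⟩) (fun h => ht ▸ ⟨u, hD h, rfl⟩) hl⟩

theorem hasConfinedProof_zero (h : .zero ∈ C) : HasConfinedProof σ X C D .zero :=
  hasConfinedProof_node (.xorR (l := []) nofun)
    (by rw [List.map_nil, nf_eq_zero (by rw [nfac_xor, List.flatMap_nil, red_nil])]
        simp only [Term.zero, subst_name, nf_name]) h nofun nofun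

theorem exists_confined_proofs {L : List Term} (h : ∀ q ∈ L, HasConfinedProof σ X C D q) :
    ∃ ps : List PTree, ps.map PTree.conc = L.map (nf ∘ subst σ) ∧
      ∀ p ∈ ps, IsProof (nfSubst σ X) p ∧ Confined (nfSubst σ C) (nfSubst σ D) p := by
  induction L with
  | nil => exact ⟨[], rfl, nofun⟩
  | cons q L ih =>
    obtain ⟨π, hπ, hc, hconf⟩ := h q List.mem_cons_self
    obtain ⟨ps, hps, hps'⟩ := ih fun q' hq' => h q' (List.mem_cons_of_mem q hq')
    refine ⟨π :: ps, by simp [hps, hc], ?_⟩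
    rintro p (_ | ⟨_, hp⟩)
    exacts [⟨hπ, hconf⟩, hps' p hp]

namespace HasConfinedProof

theorem split1 {t u : Term} (h : HasConfinedProof σ X C D (.pair t u)) (ht : t ∈ C) :
    HasConfinedProof σ X C D t := by
  obtain ⟨π, hπ, hc, hconf⟩ := h
  have hc' : π.conc = .pair (nf (subst σ t)) (nf (subst σ u)) := by rw [hc]; simp
  exact hasConfinedProof_node (.split1 hπ hc') rfl ht nofun (by simpa using hconf)

theorem split2 {t u : Term} (h : HasConfinedProof σ X C D (.pair t u)) (hu : u ∈ C) :
    HasConfinedProof σ X C D u := by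
  obtain ⟨π, hπ, hc, hconf⟩ := h
  have hc' : π.conc = .pair (nf (subst σ t)) (nf (subst σ u)) := by rw [hc]; simp
  exact hasConfinedProof_node (.split2 hπ hc') rfl hu nofun (by simpa using hconf)

theorem sdec {t v : Term} (h₁ : HasConfinedProof σ X C D (.senc t v))
    (h₂ : HasConfinedProof σ X C D v) (ht : t ∈ C) : HasConfinedProof σ X C D t := by
  obtain ⟨π₁, hπ₁, hc₁, hconf₁⟩ := h₁
  obtain ⟨π₂, hπ₂, hc₂, hconf₂⟩ := h₂
  have hc₁' : π₁.conc = .senc (nf (subst σ t)) (nf (subst σ v)) := by rw [hc₁]; simp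
  exact hasConfinedProof_node (.sdec hπ₁ hπ₂ hc₁' hc₂) rfl ht nofun (by simp [hconf₁, hconf₂])

theorem adec {t : Term} {k : ℕ} (h₁ : HasConfinedProof σ X C D (.aenc t (.pk (.name k))))
    (h₂ : HasConfinedProof σ X C D (.name k)) (ht : t ∈ C) : HasConfinedProof σ X C D t := by
  obtain ⟨π₁, hπ₁, hc₁, hconf₁⟩ := h₁
  obtain ⟨π₂, hπ₂, hc₂, hconf₂⟩ := h₂
  have hc₁' : π₁.conc = .aenc (nf (subst σ t)) (.pk (.name k)) := by rw [hc₁]; simp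
  have hc₂' : π₂.conc = .name k := by rw [hc₂]; simp
  exact hasConfinedProof_node (.adec hπ₁ hπ₂ hc₁' hc₂') rfl ht nofun (by simp [hconf₁, hconf₂])

theorem pk {k : ℕ} (h : HasConfinedProof σ X C D (.name k)) (hC : .pk (.name k) ∈ C) :
    HasConfinedProof σ X C D (.pk (.name k)) := by
  obtain ⟨π, hπ, hc, hconf⟩ := h
  have hc' : π.conc = .name k := by rw [hc]; simp
  exact hasConfinedProof_node (.pkR hπ hc') (by simp) hC nofun (by simpa using hconf)

theorem pair {a b : Term} (ha : HasConfinedProof σ X C D a) (hb : HasConfinedProof σ X C D b)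
    (hC : .pair a b ∈ C) (hD : .pair a b ∈ D) : HasConfinedProof σ X C D (.pair a b) := by
  obtain ⟨π₁, hπ₁, hc₁, hconf₁⟩ := ha
  obtain ⟨π₂, hπ₂, hc₂, hconf₂⟩ := hb
  exact hasConfinedProof_node (.pairR hπ₁ hπ₂) (by rw [hc₁, hc₂]; simp) hC (fun _ => hD)
    (by simp [hconf₁, hconf₂])

theorem senc {a b : Term} (ha : HasConfinedProof σ X C D a) (hb : HasConfinedProof σ X C D b)
    (hC : .senc a b ∈ C) (hD : .senc a b ∈ D) : HasConfinedProof σ X C D (.senc a b) := by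
  obtain ⟨π₁, hπ₁, hc₁, hconf₁⟩ := ha
  obtain ⟨π₂, hπ₂, hc₂, hconf₂⟩ := hb
  exact hasConfinedProof_node (.sencR hπ₁ hπ₂) (by rw [hc₁, hc₂]; simp) hC (fun _ => hD)
    (by simp [hconf₁, hconf₂])

theorem aenc {a : Term} {k : ℕ} (ha : HasConfinedProof σ X C D a)
    (hk : HasConfinedProof σ X C D (.pk (.name k))) (hC : .aenc a (.pk (.name k)) ∈ C)
    (hD : .aenc a (.pk (.name k)) ∈ D) : HasConfinedProof σ X C D (.aenc a (.pk (.name k))) := by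
  obtain ⟨π₁, hπ₁, hc₁, hconf₁⟩ := ha
  obtain ⟨π₂, hπ₂, hc₂, hconf₂⟩ := hk
  have hc₂' : π₂.conc = .pk (.name k) := by rw [hc₂]; simp
  exact hasConfinedProof_node (.aencR hπ₁ hπ₂ hc₂') (by rw [hc₁]; simp) hC (fun _ => hD)
    (by simp [hconf₁, hconf₂])

end HasConfinedProof

theorem GoodOperand.decomposable {q : Term} (h : GoodOperand σ X C D q) :
    Decomposable σ X C D q :=
  ⟨[q], by rw [nfac_xor, List.flatMap_singleton]; exact .refl _, by simpa using h⟩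

theorem decomposable_xor {l : List Term} (h : ∀ q ∈ l, Decomposable σ X C D q) :
    Decomposable σ X C D (.xor l) := by
  induction l with
  | nil => exact ⟨[], .refl _, nofun⟩
  | cons q l ih =>
    obtain ⟨L, hL, hgood⟩ := h q List.mem_cons_self
    obtain ⟨L', hL', hgood'⟩ := ih fun q' hq' => h q' (List.mem_cons_of_mem q hq')
    refine ⟨L ++ L', ?_, fun p hp => (List.mem_append.mp hp).elim (hgood p) (hgood' p)⟩
    simp only [nfac_xor, List.flatMap_append, List.flatMap_cons] at hL hL' ⊢
    exact hL.append hL'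

theorem decomposable_nf {t : Term} (h : Decomposable σ X C D t)
    (h0 : .zero ∈ C → HasConfinedProof σ X C D .zero) : Decomposable σ X C D (nf t) := by
  by_cases hR : red (nfac t) = []
  · rw [nf_eq_zero hR]
    exact GoodOperand.decomposable ⟨nf_name 0, h0, fun h => absurd trivial h⟩
  · obtain ⟨L, hL, hgood⟩ := h
    refine ⟨L, hL.trans ?_, hgood⟩
    rw [nfac_nf hR]
    exact (parityEq_red _).symm

theorem Decomposable.hasConfinedProof (hC : SubtermClosed C) {w : Term}
    (h : Decomposable σ X C D w) (hw : w ∈ C) (hwn : nf w = w) :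
    HasConfinedProof σ X C D w := by
  obtain ⟨L, hLw, hgood⟩ := h
  have hgood' : ∀ q ∈ red L, GoodOperand σ X C D q := fun q hq => hgood q (mem_of_mem_red hq)
  have hredw : ParityEq (nfac (.xor (red L))) (nfac w) := by
    rw [nfac_xor] at hLw ⊢
    exact ((parityEq_red L).flatMap nfac).trans hLw
  have hredC := mem_of_parityEq_nfac hC hw hwn (red_nodup L) (fun q hq => (hgood' q hq).1)
    (fun q hq => (hgood' q hq).2.2) hredw
  obtain ⟨ps, hps, hps'⟩ := exists_confined_proofs
    (L := (red L).filter fun q => decide (red (nfac (subst σ q)) ≠ [])) fun q hq =>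
      (hgood' q (List.mem_of_mem_filter hq)).2.1 (hredC q (List.mem_of_mem_filter hq))
  refine hasConfinedProof_node (.xorR fun p hp => (hps' p hp).1) ?_ hw nofun
    fun p hp => (hps' p hp).2
  rw [hps, nf_xor_filter_map_nf_subst, ← nf_subst_nf, (nf_eq_of_parityEq hredw).trans hwn]

theorem Deriv.invariant (hXC : X ⊆ C) (hC : SubtermClosed C)
    (hCD : ∀ u ∈ C, u.IsStandard → (∀ x, u ≠ .var x) → u ∈ D) {m : Mode} {u : Term}
    (h : Deriv X m u) : Invariant σ X C D m u := by
  have synth_of_isStandard : ∀ {u : Term}, u.IsStandard → nf u = u →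
      (u ∈ C → HasConfinedProof σ X C D u) → Invariant σ X C D .synth u :=
    fun hs hn hp => ⟨hp, GoodOperand.decomposable ⟨hn, hp, fun h => absurd hs h⟩⟩
  induction h with
  | ax hu hn =>
    exact ⟨hXC hu, hasConfinedProof_node (.ax ⟨_, hu, rfl⟩ (nf_nf _)) rfl (hXC hu) nofun nofun⟩
  | split1 _ ih =>
    have htC := hC (.pair_l (.refl _)) ih.1
    exact ⟨htC, ih.2.split1 htC⟩
  | split2 _ ih =>
    have huC := hC (.pair_r (.refl _)) ih.1
    exact ⟨huC, ih.2.split2 huC⟩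
  | sdec _ _ ih₁ ih₂ =>
    have htC := hC (.senc_l (.refl _)) ih₁.1
    exact ⟨htC, ih₁.2.sdec (ih₂.1 (hC (.senc_r (.refl _)) ih₁.1)) htC⟩
  | adec _ _ ih₁ ih₂ =>
    have htC := hC (.aenc_l (.refl _)) ih₁.1
    exact ⟨htC, ih₁.2.adec (ih₂.1 (hC (.aenc_r (.pk (.refl _))) ih₁.1)) htC⟩
  | factor _ hwv _ ihv ihw =>
    have hwC := hC (subterm_of_mem_facL hwv) ihv.1
    exact ⟨hwC, ihw.1 hwC⟩
  | analz h ih =>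
    exact ⟨fun _ => ih.2, GoodOperand.decomposable ⟨h.nf_eq, fun _ => ih.2, fun _ => ih.1⟩⟩
  | pk _ ih =>
    exact synth_of_isStandard trivial (by simp) fun hpC => .pk (ih.1 (hC (.pk (.refl _)) hpC)) hpC
  | pair h₁ h₂ ih₁ ih₂ =>
    exact synth_of_isStandard trivial (Deriv.pair h₁ h₂).nf_eq fun hpC =>
      .pair (ih₁.1 (hC (.pair_l (.refl _)) hpC)) (ih₂.1 (hC (.pair_r (.refl _)) hpC)) hpC
        (hCD _ hpC trivial fun _ => nofun)
  | senc h₁ h₂ ih₁ ih₂ =>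
    exact synth_of_isStandard trivial (Deriv.senc h₁ h₂).nf_eq fun hsC =>
      .senc (ih₁.1 (hC (.senc_l (.refl _)) hsC)) (ih₂.1 (hC (.senc_r (.refl _)) hsC)) hsC
        (hCD _ hsC trivial fun _ => nofun)
  | aenc h₁ h₂ ih₁ ih₂ =>
    exact synth_of_isStandard trivial (Deriv.aenc h₁ h₂).nf_eq fun haC =>
      .aenc (ih₁.1 (hC (.aenc_l (.refl _)) haC)) (ih₂.1 (hC (.aenc_r (.refl _)) haC)) haC
        (hCD _ haC trivial fun _ => nofun)
  | xor _ ih =>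
    have hdec :=
      decomposable_nf (decomposable_xor fun q hq => (ih q hq).2) hasConfinedProof_zero
    exact ⟨fun hw => hdec.hasConfinedProof hC hw (nf_nf _), hdec⟩

theorem Derives.hasConfinedProof (hXC : X ⊆ C) (hC : SubtermClosed C)
    (hCD : ∀ u ∈ C, u.IsStandard → (∀ x, u ≠ .var x) → u ∈ D) {t : Term} (h : Derives X t)
    (ht : t ∈ C) : HasConfinedProof σ X C D t := by
  obtain ⟨π, hπ, rfl⟩ := h
  exact (hπ.deriv.invariant hXC hC hCD).1 ht

end Construction

theorem whconst_proofs_general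
    (P : Protocol)
    (S : List (Role × (ℕ → Term))) (ξ : List (Term × Term)) (σ : ℕ → Term)
    (X : Set Term) (t : Term)
    (hsub : X ∪ {t} ⊆ Cset P S ξ) (h : Derives X t) :
    ∃ π : PTree, IsProof (nfSubst σ X) π ∧ π.conc = nf (subst σ t) ∧
      termsOf π ⊆ nfSubst σ (Cset P S ξ) ∧
      ∀ δ : PTree, Subproof δ π →
        (δ.rule = .pairR ∨ δ.rule = .aencR ∨ δ.rule = .sencR) →
        δ.conc ∈ TypedSet P S ξ σ := by
  have hC : SubtermClosed (Cset P S ξ) := fun _ _ hab ⟨r, hr, hbr⟩ => ⟨r, hr, hab.trans hbr⟩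
  obtain ⟨π, hπ, hconc, hterms, htyped⟩ := h.hasConfinedProof (σ := σ) (D := Dset P S ξ)
    (fun _ hx => hsub (.inl hx)) hC (fun _ hu hs hv => ⟨hu, hs, hv⟩) (hsub (.inr rfl))
  exact ⟨π, hπ, hconc, hterms, htyped⟩

/-- **Corollary.** If `X ∪ {t} ⊆ C` and `X ⊢_dy t`, then there
is a proof `π*` of `nf(Xσ) ⊢ nf(tσ)` such that `terms(π*) ⊆ nf(Cσ)`, and
moreover `conc(δ*) ∈ nf(Dσ)` for every subproof `δ*` of `π*` whose last rule is
`pair`, `aenc` or `senc`. -/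
theorem whconst_proofs (P : Protocol) (hP : P.WF)
    (S : List (Role × (ℕ → Term))) (ξ : List (Term × Term)) (σ : ℕ → Term)
    (hrun : IsRun P S ξ σ)
    (X : Set Term) (t : Term)
    (hsub : X ∪ {t} ⊆ Cset P S ξ) (h : Derives X t) :
    ∃ π : PTree, IsProof (nfSubst σ X) π ∧ π.conc = nf (subst σ t) ∧
      termsOf π ⊆ nfSubst σ (Cset P S ξ) ∧
      ∀ δ : PTree, Subproof δ π →
        (δ.rule = .pairR ∨ δ.rule = .aencR ∨ δ.rule = .sencR) →
        δ.conc ∈ TypedSet P S ξ σ :=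
  whconst_proofs_general P S ξ σ X t hsub h
end DYXor
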